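/- arXiv:2405.00789 — 3 statements merged into one kernel-verified Lean document; each statement's English description precedes it below -/
import Mathlib

section
/- Let n ≥ 1 and d ≥ 1. For every sequence of complex 2^n × 2^n matrices C_1, …, C_d and all bit strings x, z ∈ {0,1}^n, the squared modulus of the (x,z) entry of the product C_d ⋯ C_1 admits the Pauli-path expansion |⟨x|C_d⋯C_1|z⟩|² = Σ_{s} ⟨x|𝒫_{s^{(d+1)}}|x⟩ · (Π_{j=1}^{d} Tr(𝒫_{s^{(j+1)}} C_j 𝒫_{s^{(j)}} C_j†)) · ⟨z|𝒫_{s^{(1)}}|z⟩, where the sum runs over all Pauli paths s = (s^{(1)}, …, s^{(d+1)}) ∈ ({0,1,2,3}^n)^{d+1}, ⟨x|M|x⟩ denotes the diagonal entry M_{x,x}, and C† denotes conjugate transpose. -/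
open Matrix

/-- The four single-qubit Pauli matrices: `σ₀ = I`, `σ₁ = X`, `σ₂ = Y`, `σ₃ = Z`. -/
noncomputable def pauli : Fin 4 → Matrix (Fin 2) (Fin 2) ℂ
  | 0 => !![1, 0; 0, 1]
  | 1 => !![0, 1; 1, 0]
  | 2 => !![0, -Complex.I; Complex.I, 0]
  | 3 => !![1, 0; 0, -1]

/-- The normalized `n`-qubit Pauli string `𝒫_s = 2^{-n/2} σ_{s₁} ⊗ ⋯ ⊗ σ_{sₙ}`,
as a `2^n × 2^n` matrix indexed by bit strings, with entries
`(𝒫_s)_{x,y} = 2^{-n/2} ∏ i, (σ_{sᵢ})_{xᵢ,yᵢ}`. -/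
noncomputable def pauliString (n : ℕ) (s : Fin n → Fin 4) :
    Matrix (Fin n → Fin 2) (Fin n → Fin 2) ℂ :=
  fun x y => ((Real.sqrt 2 : ℂ) ^ n)⁻¹ * ∏ i, pauli (s i) (x i) (y i)

lemma pauli_complete (a b c e : Fin 2) :
    ∑ t : Fin 4, pauli t c e * pauli t a b = if c = b ∧ e = a then 2 else 0 := by
  fin_cases a <;> fin_cases b <;> fin_cases c <;> fin_cases e <;>
    simp [pauli, Fin.sum_univ_four] <;> ring_nf

lemma pauliString_complete (n : ℕ) (a b c e : Fin n → Fin 2) :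
    ∑ s : Fin n → Fin 4, pauliString n s c e * pauliString n s a b =
      if c = b ∧ e = a then 1 else 0 := by
  have hsq : (Real.sqrt 2 : ℂ) * (Real.sqrt 2 : ℂ) = 2 := by
    rw [← Complex.ofReal_mul, Real.mul_self_sqrt (by norm_num)]
    norm_num
  have h2 : ((Real.sqrt 2 : ℂ) ^ n)⁻¹ * ((Real.sqrt 2 : ℂ) ^ n)⁻¹ * (2:ℂ) ^ n = 1 := by
    rw [← mul_inv, ← mul_pow, hsq]
    simp
  simp only [pauliString]
  have step1 : ∑ s : Fin n → Fin 4,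
      (((Real.sqrt 2 : ℂ) ^ n)⁻¹ * ∏ i, pauli (s i) (c i) (e i)) *
      (((Real.sqrt 2 : ℂ) ^ n)⁻¹ * ∏ i, pauli (s i) (a i) (b i)) =
      ((Real.sqrt 2 : ℂ) ^ n)⁻¹ * ((Real.sqrt 2 : ℂ) ^ n)⁻¹ *
        ∑ s : Fin n → Fin 4, ∏ i, (pauli (s i) (c i) (e i) * pauli (s i) (a i) (b i)) := by
    rw [Finset.mul_sum]
    refine Finset.sum_congr rfl fun s _ => ?_
    rw [Finset.prod_mul_distrib]; ring
  rw [step1]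
  have step2 : ∑ s : Fin n → Fin 4, ∏ i, (pauli (s i) (c i) (e i) * pauli (s i) (a i) (b i)) =
      ∏ i, ∑ t : Fin 4, pauli t (c i) (e i) * pauli t (a i) (b i) := by
    rw [Finset.prod_univ_sum]
    simp
  rw [step2]
  simp_rw [pauli_complete]
  by_cases h : c = b ∧ e = a
  · obtain ⟨h1, h2'⟩ := h
    subst h1; subst h2'
    simp only [and_self, if_true, Finset.prod_const, Finset.card_univ, Fintype.card_fin]
    exact h2
  · rw [if_neg h]
    have : ∃ i, ¬(c i = b i ∧ e i = a i) := by
      by_contra hc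
      push_neg at hc
      exact h ⟨funext fun i => (hc i).1, funext fun i => (hc i).2⟩
    obtain ⟨i, hi⟩ := this
    rw [Finset.prod_eq_zero (Finset.mem_univ i) (by rw [if_neg hi]), mul_zero]

lemma pauli_recon (n : ℕ) (ρ : Matrix (Fin n → Fin 2) (Fin n → Fin 2) ℂ)
    (a b : Fin n → Fin 2) :
    ∑ s : Fin n → Fin 4, (pauliString n s * ρ).trace * pauliString n s a b = ρ a b := by
  simp only [Matrix.trace, Matrix.diag, Matrix.mul_apply]
  have key : ∀ s : Fin n → Fin 4,
      (∑ c, ∑ e, pauliString n s c e * ρ e c) * pauliString n s a b =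
      ∑ c, ∑ e, ρ e c * (pauliString n s c e * pauliString n s a b) := by
    intro s
    rw [Finset.sum_mul]
    refine Finset.sum_congr rfl fun cc _ => ?_
    rw [Finset.sum_mul]
    exact Finset.sum_congr rfl fun ee _ => by ring
  simp_rw [key]
  rw [Finset.sum_comm]
  simp_rw [Finset.sum_comm (γ := Fin n → Fin 4), ← Finset.mul_sum, pauliString_complete]
  simp only [mul_ite, mul_one, mul_zero, ite_and]
  rw [Finset.sum_eq_single b]
  · simp [Finset.sum_ite_eq']
  · intro c _ hc; simp [hc]
  · intro hb; exact absurd (Finset.mem_univ b) hb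

lemma pauli_recon_matrix (n : ℕ) (ρ : Matrix (Fin n → Fin 2) (Fin n → Fin 2) ℂ) :
    ∑ s : Fin n → Fin 4, (pauliString n s * ρ).trace • pauliString n s = ρ := by
  ext a b
  rw [Matrix.sum_apply]
  simp only [Matrix.smul_apply, smul_eq_mul]
  exact pauli_recon n ρ a b

lemma trace_conj_expand (n : ℕ) (Cm ρ : Matrix (Fin n → Fin 2) (Fin n → Fin 2) ℂ)
    (u : Fin n → Fin 4) :
    (pauliString n u * (Cm * ρ * Cmᴴ)).trace =
      ∑ t : Fin n → Fin 4,
        (pauliString n u * Cm * pauliString n t * Cmᴴ).trace * (pauliString n t * ρ).trace := by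
  conv_lhs => rw [← pauli_recon_matrix n ρ]
  rw [Finset.mul_sum]
  simp only [Matrix.mul_smul, Matrix.smul_mul, Matrix.mul_sum, Matrix.sum_mul,
    Matrix.trace_sum, Matrix.trace_smul, smul_eq_mul]
  refine Finset.sum_congr rfl fun t _ => ?_
  rw [mul_comm]
  congr 2
  noncomm_ring

lemma key_expansion (n : ℕ) : ∀ (m : ℕ) (C : Fin m → Matrix (Fin n → Fin 2) (Fin n → Fin 2) ℂ)
    (ρ : Matrix (Fin n → Fin 2) (Fin n → Fin 2) ℂ) (a b : Fin n → Fin 2),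
    ((List.ofFn C).reverse.prod * ρ * ((List.ofFn C).reverse.prod)ᴴ) a b =
      ∑ s : Fin (m + 1) → (Fin n → Fin 4),
        pauliString n (s (Fin.last m)) a b *
          (∏ j : Fin m,
            (pauliString n (s j.succ) * C j * pauliString n (s j.castSucc) * (C j)ᴴ).trace) *
          (pauliString n (s 0) * ρ).trace
  | 0, C, ρ, a, b => by
    simp only [List.ofFn_zero, List.reverse_nil, List.prod_nil, Matrix.one_mul,
      Matrix.conjTranspose_one, Matrix.mul_one, Finset.univ_eq_empty, Finset.prod_empty, mul_one]
    rw [← (Equiv.funUnique (Fin 1) (Fin n → Fin 4)).symm.sum_comp]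
    simp only [Equiv.funUnique_symm_apply]
    rw [← pauli_recon n ρ a b]
    refine Finset.sum_congr rfl fun t _ => ?_
    simp [Fin.last, mul_comm]
  | (m + 1), C, ρ, a, b => by
    have hofn : List.ofFn C = C 0 :: List.ofFn (fun i => C i.succ) := List.ofFn_succ
    have hprod : (List.ofFn C).reverse.prod =
        (List.ofFn (fun i => C i.succ)).reverse.prod * C 0 := by
      rw [hofn, List.reverse_cons, List.prod_append, List.prod_singleton]
    rw [hprod]
    have hassoc : ((List.ofFn (fun i => C i.succ)).reverse.prod * C 0) * ρ *
        ((List.ofFn (fun i => C i.succ)).reverse.prod * C 0)ᴴ =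
        (List.ofFn (fun i => C i.succ)).reverse.prod * (C 0 * ρ * (C 0)ᴴ) *
          ((List.ofFn (fun i => C i.succ)).reverse.prod)ᴴ := by
      rw [Matrix.conjTranspose_mul]
      noncomm_ring
    rw [hassoc, key_expansion n m (fun i => C i.succ) (C 0 * ρ * (C 0)ᴴ) a b]
    simp_rw [trace_conj_expand]
    rw [← (Fin.consEquiv (fun _ : Fin (m + 2) => (Fin n → Fin 4))).sum_comp]
    rw [Fintype.sum_prod_type, Finset.sum_comm]
    refine Finset.sum_congr rfl fun s' _ => ?_
    rw [Finset.mul_sum]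
    refine Finset.sum_congr rfl fun t _ => ?_
    simp only [Fin.consEquiv_apply, Fin.cons_zero, Fin.cons_succ, Fin.prod_univ_succ,
      ← Fin.succ_last, ← Fin.succ_castSucc, Fin.castSucc_zero]
    ring

/-- **Pauli-path expansion** of output probabilities of a layered circuit:
`|⟨x|C_d ⋯ C_1|z⟩|² = ∑_s ⟨x|𝒫_{s^{(d+1)}}|x⟩ (∏_{j=1}^d Tr(𝒫_{s^{(j+1)}} C_j 𝒫_{s^{(j)}} C_j†))
⟨z|𝒫_{s^{(1)}}|z⟩`, summed over all Pauli paths `s ∈ ({0,1,2,3}^n)^{d+1}`. -/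
theorem pauli_path_expansion (n d : ℕ) (hn : 1 ≤ n) (hd : 1 ≤ d)
    (C : Fin d → Matrix (Fin n → Fin 2) (Fin n → Fin 2) ℂ)
    (x z : Fin n → Fin 2) :
    ((‖((List.ofFn C).reverse.prod) x z‖ ^ 2 : ℝ) : ℂ) =
      ∑ s : Fin (d + 1) → (Fin n → Fin 4),
        pauliString n (s (Fin.last d)) x x *
          (∏ j : Fin d,
            (pauliString n (s j.succ) * C j * pauliString n (s j.castSucc) * (C j)ᴴ).trace) *
          pauliString n (s 0) z z := by
  set ρz : Matrix (Fin n → Fin 2) (Fin n → Fin 2) ℂ :=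
    fun a b => (if a = z then 1 else 0) * (if b = z then 1 else 0) with hρz
  have htr : ∀ u : Fin n → Fin 4, (pauliString n u * ρz).trace = pauliString n u z z := by
    intro u
    simp only [Matrix.trace, Matrix.diag, Matrix.mul_apply]
    rw [hρz]
    simp [Finset.sum_ite_eq, Finset.sum_ite_eq', mul_comm]
  have hkey := key_expansion n d C ρz x x
  simp_rw [htr] at hkey
  rw [← hkey]
  set U := (List.ofFn C).reverse.prod with hU
  have hentry : (U * ρz * Uᴴ) x x = U x z * (starRingEnd ℂ) (U x z) := by
    simp only [Matrix.mul_apply, Matrix.conjTranspose_apply]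
    rw [hρz]
    simp only [mul_ite, mul_one, mul_zero, ite_mul, zero_mul, Finset.sum_ite_eq',
      Finset.mem_univ, if_true]
    rw [Finset.sum_eq_single z]
    · simp [Finset.sum_ite_eq']
    · intro c _ hc; simp [hc]
    · intro hb; exact absurd (Finset.mem_univ z) hb
  rw [hentry, Complex.sq_norm, Complex.mul_conj]
end

section
/- Let k ≥ 1, let π be a permutation of {1,…,k}, and let Q_1, …, Q_k be two-qubit Pauli strings. If for every cycle of π, choosing an element a of the cycle and letting m be its length, the ordered product Q_a Q_{π(a)} Q_{π²(a)} ⋯ Q_{π^{m-1}(a)} equals the 4×4 identity matrix I₄, then Tr(W_π (Q_1 ⊗ ⋯ ⊗ Q_k)) = 4^{c(π)}. -/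
open Matrix
open scoped Kronecker

/-- The permutation operator `W_π` on `(ℂ^ι)^{⊗ k}` (here `N = card ι`): the matrix, with
rows and columns indexed by tuples `i ∈ ι^k`, whose `(i,j)` entry is `1` if `i_a = j_{π(a)}`
for every `a` and `0` otherwise. -/
def permOp (k : ℕ) (ι : Type) [DecidableEq ι] (π : Equiv.Perm (Fin k)) :
    Matrix (Fin k → ι) (Fin k → ι) ℂ :=
  fun i j => if ∀ a, i a = j (π a) then 1 else 0

/-- The Kronecker product `Q_1 ⊗ ⋯ ⊗ Q_k`, with rows and columns indexed by tuples in `ι^k`: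
its `(i,j)` entry is `∏ a, (Q_a)_{i_a, j_a}`. -/
def kronPow {k : ℕ} {ι : Type} [Fintype ι] (Q : Fin k → Matrix ι ι ℂ) :
    Matrix (Fin k → ι) (Fin k → ι) ℂ :=
  fun i j => ∏ a, Q a (i a) (j a)

/-- The number of cycles of a permutation, counting fixed points as cycles of length 1. -/
def cycleCount {k : ℕ} (π : Equiv.Perm (Fin k)) : ℕ :=
  π.cycleType.card + (Finset.univ.filter fun a => π a = a).card


section AuxHelpers

open Equiv Equiv.Perm Function Finset

set_option linter.unusedSectionVars false

variable {α : Type} [Fintype α] [DecidableEq α] {ι : Type} [Fintype ι] [DecidableEq ι]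


lemma sum_split (a : α) (F : (α → ι) → ℂ) :
    ∑ i : α → ι, F i
      = ∑ y : ι, ∑ j : {x // x ≠ a} → ι, F (fun x => if h : x = a then y else j ⟨x, h⟩) := by
  rw [← Equiv.sum_comp (Equiv.funSplitAt a ι).symm F, Fintype.sum_prod_type]
  refine Finset.sum_congr rfl fun y _ => Finset.sum_congr rfl fun j _ => ?_
  congr 1
  ext x
  by_cases h : x = a
  · subst h; simp [Equiv.funSplitAt, Equiv.piSplitAt]
  · simp [Equiv.funSplitAt, Equiv.piSplitAt, h]

set_option linter.unusedSectionVars false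

lemma cycleDelta (π : Equiv.Perm α) (a : α) (ha : π a ≠ a) :
    (Equiv.swap a (π a) * π).cycleType.card + π.support.card
      = π.cycleType.card + (Equiv.swap a (π a) * π).support.card + 1 := by
  classical
  set b := π a with hb
  set c := π.cycleOf a with hc
  have hcmem : c ∈ π.cycleFactorsFinset :=
    cycleOf_mem_cycleFactorsFinset_iff.mpr (Equiv.Perm.mem_support.2 ha)
  set ρ := π * c⁻¹ with hρ
  have hdisj : Equiv.Perm.Disjoint ρ c := disjoint_mul_inv_of_mem_cycleFactorsFinset hcmem
  have hπ : π = ρ * c := by rw [hρ]; group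
  have hccycle : c.IsCycle := isCycle_cycleOf π ha
  have hca : c a = b := cycleOf_apply_self π a
  have hcana : c a ≠ a := by rw [hca]; exact ha
  have hamem : a ∈ c.support := by
    rw [Equiv.Perm.mem_support, hca]; exact ha
  have hbmem : b ∈ c.support := by
    rw [← hca, apply_mem_support]; exact hamem
  have hswapdisj : Equiv.Perm.Disjoint ρ (Equiv.swap a b) := by
    intro x
    by_cases hx : x = a ∨ x = b
    · left
      rcases hdisj x with h | h
      · exact h
      · exfalso
        rcases hx with rfl | rfl
        · exact (Equiv.Perm.mem_support.1 hamem) h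
        · exact (Equiv.Perm.mem_support.1 hbmem) h
    · push_neg at hx
      right
      exact swap_apply_of_ne_of_ne hx.1 hx.2
  have hσ : Equiv.swap a b * π = ρ * (Equiv.swap a b * c) := by
    nth_rewrite 1 [hπ]
    rw [← mul_assoc, ← hswapdisj.commute.eq, mul_assoc]
  have hct : π.cycleType = ρ.cycleType + c.cycleType := by
    nth_rewrite 1 [hπ]; exact hdisj.cycleType_mul
  have hcardsup : π.support.card = ρ.support.card + c.support.card := by
    nth_rewrite 1 [hπ]
    rw [hdisj.support_mul, Finset.card_union_of_disjoint hdisj.disjoint_support]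
  by_cases h2 : c (c a) = a
  · -- 2-cycle case
    have hceq : c = Equiv.swap a (c a) := hccycle.eq_swap_of_apply_apply_eq_self hcana h2
    have h1 : Equiv.swap a b * c = 1 := by
      rw [hceq, hca, Equiv.swap_mul_self]
    have hσρ : Equiv.swap a b * π = ρ := by rw [hσ, h1, mul_one]
    have hcsup : c.support.card = 2 := by
      rw [hceq, card_support_swap hcana.symm]
    rw [hσρ, hct, hccycle.cycleType]
    simp only [Multiset.card_add, Multiset.coe_card, List.length_singleton, Multiset.card_singleton]
    omega
  · -- longer cycle
    have hcyc' : (Equiv.swap a (c a) * c).IsCycle := hccycle.swap_mul hcana h2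
    have hsup' : (Equiv.swap a (c a) * c).support = c.support \ {a} :=
      support_swap_mul_eq c a h2
    have hdisj' : Equiv.Perm.Disjoint ρ (Equiv.swap a (c a) * c) := by
      intro x
      rcases hdisj x with h | h
      · exact Or.inl h
      · right
        by_cases hx : x = a ∨ x = c a
        · exfalso
          rcases hx with rfl | rfl
          · exact (Equiv.Perm.mem_support.1 hamem) h
          · rw [← hca] at hbmem; exact (Equiv.Perm.mem_support.1 hbmem) h
        · push_neg at hx
          simp [Perm.mul_apply, h, swap_apply_of_ne_of_ne hx.1 hx.2]
    have hσ' : Equiv.swap a b * π = ρ * (Equiv.swap a (c a) * c) := by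
      rw [hσ, hca]
    have hcard' : (Equiv.swap a (c a) * c).support.card = c.support.card - 1 := by
      rw [hsup', Finset.sdiff_singleton_eq_erase, Finset.card_erase_of_mem hamem]
    have hcpos : 1 ≤ c.support.card := Finset.card_pos.mpr ⟨a, hamem⟩
    rw [hσ', hdisj'.cycleType_mul, hdisj'.support_mul,
      Finset.card_union_of_disjoint hdisj'.disjoint_support, hct,
      hccycle.cycleType, hcyc'.cycleType]
    simp only [Multiset.card_add, Multiset.coe_card, List.length_singleton, Multiset.card_singleton]
    omega


lemma contraction (π : Equiv.Perm α) (a : α) (ha : π a ≠ a) (Q : α → Matrix ι ι ℂ) :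
    ∑ i : α → ι, ∏ x, (if x = a then (1 : Matrix ι ι ℂ) else if x = π a then Q a * Q (π a) else Q x)
        (i ((Equiv.swap a (π a) * π)⁻¹ x)) (i x)
      = (Fintype.card ι : ℂ) * ∑ i : α → ι, ∏ x, Q x (i (π⁻¹ x)) (i x) := by
  classical
  set b := π a with hb
  have hab : a ≠ b := fun h => ha h.symm
  set σ := Equiv.swap a b * π with hσ
  set Q' : α → Matrix ι ι ℂ :=
    fun x => if x = a then (1 : Matrix ι ι ℂ) else if x = b then Q a * Q b else Q x with hQ'
  have hσinv : ∀ x, σ⁻¹ x = π⁻¹ (Equiv.swap a b x) := by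
    intro x; rw [hσ, _root_.mul_inv_rev, mul_apply, swap_inv]
  have hσa : σ⁻¹ a = a := by
    rw [hσinv, swap_apply_left, hb, Equiv.Perm.inv_def, Equiv.symm_apply_apply]
  have hσb : σ⁻¹ b = π⁻¹ a := by rw [hσinv, swap_apply_right]
  have hσx : ∀ x, x ≠ a → x ≠ b → σ⁻¹ x = π⁻¹ x := by
    intro x h1 h2; rw [hσinv, swap_apply_of_ne_of_ne h1 h2]
  have hπia : π⁻¹ a ≠ a := fun h => ha (((Equiv.Perm.inv_eq_iff_eq).mp h).symm)
  have hπib : π⁻¹ b = a := by rw [hb, Equiv.Perm.inv_def, Equiv.symm_apply_apply]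
  have hπix : ∀ x, x ≠ b → π⁻¹ x ≠ a := by
    intro x hx h
    apply hx
    rw [← Equiv.apply_symm_apply π x, ← Equiv.Perm.inv_def, h, ← hb]
  have hbmem : b ∈ univ.erase a := Finset.mem_erase.mpr ⟨Ne.symm hab, mem_univ b⟩
  have hprod : ∀ f : α → ℂ, ∏ x, f x = f a * (f b * ∏ x ∈ (univ.erase a).erase b, f x) := by
    intro f
    rw [← Finset.mul_prod_erase univ f (mem_univ a), ← Finset.mul_prod_erase _ f hbmem]
  have core : ∀ (y : ι) (j : {x // x ≠ a} → ι),
      (∏ x, Q' x ((fun z => if h : z = a then y else j ⟨z, h⟩) (σ⁻¹ x))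
        ((fun z => if h : z = a then y else j ⟨z, h⟩) x))
      = ∑ y' : ι, ∏ x, Q x ((fun z => if h : z = a then y' else j ⟨z, h⟩) (π⁻¹ x))
        ((fun z => if h : z = a then y' else j ⟨z, h⟩) x) := by
    intro y j
    have restaeq : ∀ (y₁ y₂ : ι), (∏ x ∈ (univ.erase a).erase b,
        Q' x ((fun z => if h : z = a then y₁ else j ⟨z, h⟩) (σ⁻¹ x))
          ((fun z => if h : z = a then y₁ else j ⟨z, h⟩) x))
        = ∏ x ∈ (univ.erase a).erase b,
        Q x ((fun z => if h : z = a then y₂ else j ⟨z, h⟩) (π⁻¹ x))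
          ((fun z => if h : z = a then y₂ else j ⟨z, h⟩) x) := by
      intro y₁ y₂
      refine Finset.prod_congr rfl fun x hx => ?_
      obtain ⟨hxb, hxa, -⟩ :  x ≠ b ∧ x ≠ a ∧ x ∈ univ := by
        simpa [Finset.mem_erase] using hx
      rw [hσx x hxa hxb]
      simp only [hQ', if_neg hxa, if_neg hxb, dif_neg hxa, dif_neg (hπix x hxb)]
    simp only [hQ'] at restaeq ⊢
    simp only [hprod]
    simp only [dif_pos rfl, hσa, hσb, hπib, dif_neg hπia, dif_neg (Ne.symm hab),
      dite_true, if_true, if_pos rfl, if_neg (Ne.symm hab), Matrix.one_apply_eq, one_mul]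
    have restind : ∀ y₁ y₂ : ι, (∏ x ∈ (univ.erase a).erase b,
        Q x (if h : π⁻¹ x = a then y₁ else j ⟨π⁻¹ x, h⟩) (if h : x = a then y₁ else j ⟨x, h⟩))
        = ∏ x ∈ (univ.erase a).erase b,
        Q x (if h : π⁻¹ x = a then y₂ else j ⟨π⁻¹ x, h⟩) (if h : x = a then y₂ else j ⟨x, h⟩) := by
      intro y₁ y₂
      refine Finset.prod_congr rfl fun x hx => ?_
      obtain ⟨hxb, hxa, -⟩ : x ≠ b ∧ x ≠ a ∧ x ∈ univ := by
        simpa [Finset.mem_erase] using hx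
      rw [dif_neg hxa, dif_neg hxa, dif_neg (hπix x hxb), dif_neg (hπix x hxb)]
    rw [restaeq y y, Matrix.mul_apply, Finset.sum_mul]
    refine Finset.sum_congr rfl fun x _ => ?_
    rw [mul_assoc, restind y x]
  rw [sum_split a (fun i => ∏ x, Q' x (i (σ⁻¹ x)) (i x)),
    sum_split a (fun i => ∏ x, Q x (i (π⁻¹ x)) (i x))]
  trans (∑ _y : ι, ∑ y' : ι, ∑ j : {x // x ≠ a} → ι,
      ∏ x, Q x ((fun z => if h : z = a then y' else j ⟨z, h⟩) (π⁻¹ x))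
        ((fun z => if h : z = a then y' else j ⟨z, h⟩) x))
  · refine Finset.sum_congr rfl fun y _ => ?_
    rw [Finset.sum_congr rfl fun j _ => core y j]
    exact Finset.sum_comm
  · rw [Finset.sum_const, card_univ, nsmul_eq_mul]

lemma key [Nonempty ι] (π : Equiv.Perm α) (Q P : α → Matrix ι ι ℂ)
    (hP : ∀ x, IsUnit (P x)) (hQP : ∀ x, Q x * P (π x) = P x) :
    ∑ i : α → ι, ∏ x, Q x (i (π⁻¹ x)) (i x)
      = (Fintype.card ι : ℂ) ^ (π.cycleType.card + (Fintype.card α - π.support.card)) := by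
  classical
  generalize hn : π.support.card = n
  induction n using Nat.strong_induction_on generalizing π Q P with
  | _ n ih =>
  by_cases hsupp : π.support = ∅
  · -- π = 1
    have hπ1 : π = 1 := Equiv.Perm.support_eq_empty_iff.mp hsupp
    have hQ1 : ∀ x, Q x = 1 := by
      intro x
      have := hQP x
      rw [hπ1] at this
      simp only [Equiv.Perm.one_apply] at this
      exact (hP x).mul_right_cancel (by rwa [one_mul])
    subst hπ1
    simp only [hQ1, inv_one, Equiv.Perm.one_apply, Matrix.one_apply_eq]
    rw [Finset.prod_const_one, Finset.sum_const, Finset.card_univ, nsmul_eq_mul, mul_one,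
      Fintype.card_fun]
    simp [Equiv.Perm.cycleType_one, ← hn, Equiv.Perm.support_one]
  · obtain ⟨a, ha⟩ : ∃ a, π a ≠ a := by
      by_contra h
      push_neg at h
      exact hsupp (Finset.eq_empty_iff_forall_notMem.mpr
        (by simp [Equiv.Perm.mem_support, h]))
    set σ := Equiv.swap a (π a) * π with hσ
    set Q' : α → Matrix ι ι ℂ :=
      fun x => if x = a then (1 : Matrix ι ι ℂ) else if x = π a then Q a * Q (π a) else Q x
      with hQ'
    set P' : α → Matrix ι ι ℂ :=
      fun x => if x = a then (1 : Matrix ι ι ℂ) else if x = π a then P a else P x with hP'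
    have hσsupp : σ.support.card < n := hn ▸ Equiv.Perm.card_support_swap_mul ha
    have hP'unit : ∀ x, IsUnit (P' x) := by
      intro x
      rw [hP']
      dsimp only
      split_ifs
      · exact isUnit_one
      · exact hP a
      · exact hP x
    have hQ'P' : ∀ x, Q' x * P' (σ x) = P' x := by
      intro x
      have hσx : σ x = Equiv.swap a (π a) (π x) := rfl
      by_cases hxa : x = a
      · subst hxa
        have : σ x = x := by rw [hσx, swap_apply_right]
        rw [this]
        simp [hQ', hP']
      · by_cases hxb : x = π a
        · -- x = π a
          subst hxb
          by_cases h2 : π (π a) = a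
          · have : σ (π a) = π a := by rw [hσx, h2, swap_apply_left]
            rw [this]
            simp only [hQ', hP', eq_self_iff_true, if_true, if_neg hxa, if_pos rfl]
            have e1 : Q (π a) * P a = P (π a) := by
              have := hQP (π a); rwa [h2] at this
            have e2 : Q a * P (π a) = P a := hQP a
            rw [mul_assoc, e1, e2]
          · have hne1 : π (π a) ≠ a := h2
            have hne2 : π (π a) ≠ π a := fun h => ha (π.injective h)
            have : σ (π a) = π (π a) := by rw [hσx, swap_apply_of_ne_of_ne hne1 hne2]
            rw [this]
            simp only [hQ', hP', eq_self_iff_true, if_true, if_neg hxa, if_pos rfl, if_neg hne1, if_neg hne2]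
            rw [mul_assoc, hQP (π a), hQP a]
        · -- x ∉ {a, π a}
          have hπxb : π x ≠ π a := fun h => hxa (π.injective h)
          by_cases hπxa : π x = a
          · have : σ x = π a := by rw [hσx, hπxa, swap_apply_left]
            rw [this]
            simp only [hQ', hP', eq_self_iff_true, if_true, if_neg hxa, if_neg hxb, if_neg ha, if_pos rfl]
            have := hQP x; rwa [hπxa] at this
          · have : σ x = π x := by rw [hσx, swap_apply_of_ne_of_ne hπxa hπxb]
            rw [this]
            simp only [hQ', hP', eq_self_iff_true, if_true, if_neg hxa, if_neg hxb, if_neg hπxa, if_neg hπxb]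
            exact hQP x
    have hrec := ih σ.support.card hσsupp σ Q' P' hP'unit hQ'P' rfl
    have hcontr : (∑ i : α → ι, ∏ x, Q' x (i (σ⁻¹ x)) (i x))
        = (Fintype.card ι : ℂ) * ∑ i : α → ι, ∏ x, Q x (i (π⁻¹ x)) (i x) :=
      contraction π a ha Q
    rw [hrec] at hcontr
    have hcard : (Fintype.card ι : ℂ) ≠ 0 := by
      simp [Fintype.card_ne_zero]
    have hdelta := cycleDelta π a ha
    rw [← hσ] at hdelta
    have hsle : π.support.card ≤ Fintype.card α := Finset.card_le_univ _
    have hexp : σ.cycleType.card + (Fintype.card α - σ.support.card)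
        = (π.cycleType.card + (Fintype.card α - π.support.card)) + 1 := by
      have hsle' : σ.support.card ≤ Fintype.card α := Finset.card_le_univ _
      omega
    rw [hexp, pow_succ'] at hcontr
    rw [← hn]
    exact mul_left_cancel₀ hcard hcontr.symm



lemma exists_P (π : Equiv.Perm α) (Q : α → Matrix ι ι ℂ)
    (hunit : ∀ x, IsUnit (Q x))
    (h : ∀ x, ((List.range (Function.minimalPeriod (⇑π) x)).map
      (fun t => Q ((π ^ t) x))).prod = 1) :
    ∃ P : α → Matrix ι ι ℂ, (∀ x, IsUnit (P x)) ∧ ∀ x, Q x * P (π x) = P x := by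
  classical
  have hper : ∀ x : α, x ∈ periodicPts (⇑π) := by
    intro x
    exact ⟨orderOf π, orderOf_pos π, by
      show (⇑π)^[orderOf π] x = x
      rw [Equiv.Perm.iterate_eq_pow, pow_orderOf_eq_one]
      rfl⟩
  set m : α → ℕ := fun x => Function.minimalPeriod (⇑π) x with hm
  have hmpos : ∀ x, 0 < m x := fun x => Function.minimalPeriod_pos_of_mem_periodicPts (hper x)
  have hmapply : ∀ x, m (π x) = m x := fun x => Function.minimalPeriod_apply (hper x)
  have hmiter : ∀ x (n : ℕ), m ((π ^ n) x) = m x := by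
    intro x n
    have := Function.minimalPeriod_apply_iterate (hper x) n
    rwa [Equiv.Perm.iterate_eq_pow] at this
  have hmper : ∀ x, (π ^ m x) x = x := by
    intro x
    have := Function.iterate_minimalPeriod (f := ⇑π) (x := x)
    rwa [Equiv.Perm.iterate_eq_pow] at this
  set s : Setoid α := Equiv.Perm.SameCycle.setoid π with hs
  set rep : α → α := fun x => (Quotient.mk s x).out with hrep
  have hrepsame : ∀ x, π.SameCycle (rep x) x := fun x => Quotient.mk_out x
  have hrepapply : ∀ x, rep (π x) = rep x := by
    intro x
    show (Quotient.mk s (π x)).out = (Quotient.mk s x).out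
    congr 1
    exact Quotient.sound (Setoid.symm ⟨1, by simp⟩)
  have hex : ∀ x, ∃ t : ℕ, (π ^ t) (rep x) = x := by
    intro x
    obtain ⟨i, -, hi⟩ := (hrepsame x).exists_pow_eq'
    exact ⟨i, hi⟩
  set t : α → ℕ := fun x => Nat.find (hex x) with ht
  have htspec : ∀ x, (π ^ t x) (rep x) = x := fun x => Nat.find_spec (hex x)
  have hmrep : ∀ x, m (rep x) = m x := by
    intro x
    have := hmiter (rep x) (t x)
    rw [htspec x] at this
    omega
  have htlt : ∀ x, t x < m x := by
    intro x
    have hmod : (π ^ (t x % m (rep x))) (rep x) = x := by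
      have h2 := Function.iterate_mod_minimalPeriod_eq (f := ⇑π) (x := rep x) (n := t x)
      rw [Equiv.Perm.iterate_eq_pow, Equiv.Perm.iterate_eq_pow] at h2
      show (π ^ (t x % m (rep x))) (rep x) = x
      simp only [hm]
      rw [h2]
      exact htspec x
    have h1 : t x ≤ t x % m (rep x) := Nat.find_min' (hex x) hmod
    have h2 : t x % m (rep x) < m (rep x) := Nat.mod_lt _ (hmpos (rep x))
    have h3 := hmrep x
    omega
  refine ⟨fun x => ((List.range (m x - t x)).map (fun s => Q ((π ^ s) x))).prod, ?_, ?_⟩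
  · intro x
    refine List.prod_isUnit ?_
    intro M hM
    obtain ⟨sn, -, rfl⟩ := List.mem_map.mp hM
    exact hunit _
  · intro x
    dsimp only
    by_cases hcase : rep x = π x
    · -- end of cycle
      have ht0 : t (π x) = 0 := by
        show Nat.find (hex (π x)) = 0
        rw [Nat.find_eq_zero]
        show (π ^ 0) (rep (π x)) = π x
        rw [pow_zero, hrepapply]
        exact hcase
      have hP1 : ((List.range (m (π x) - t (π x))).map (fun s => Q ((π ^ s) (π x)))).prod = 1 := by
        rw [ht0, Nat.sub_zero]
        exact h (π x)
      have htx : m x - t x = 1 := by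
        have hper' : (π ^ (t x + 1)) (rep x) = rep x := by
          rw [pow_succ', Equiv.Perm.mul_apply, htspec x, ← hcase]
        have hdvd : m (rep x) ∣ t x + 1 := by
          apply Function.IsPeriodicPt.minimalPeriod_dvd
          show (⇑π)^[t x + 1] (rep x) = rep x
          rw [Equiv.Perm.iterate_eq_pow]; exact hper'
        rw [hmrep x] at hdvd
        have h4 := htlt x
        have h5 := hmpos x
        rcases hdvd with ⟨c, hc⟩
        rcases Nat.lt_or_ge c 2 with hc2 | hc2
        · interval_cases c <;> omega
        · nlinarith
      rw [hP1, mul_one, htx, show List.range 1 = [0] from rfl, List.map_singleton, List.prod_singleton, pow_zero,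
        Equiv.Perm.one_apply]
    · -- middle of cycle
      have htsucc : t (π x) = t x + 1 := by
        have hub : t (π x) ≤ t x + 1 := by
          apply Nat.find_min'
          show (π ^ (t x + 1)) (rep (π x)) = π x
          rw [hrepapply, pow_succ', Equiv.Perm.mul_apply, htspec x]
        have hlb : t x + 1 ≤ t (π x) := by
          rcases Nat.eq_zero_or_pos (t (π x)) with h0 | hpos
          · exfalso
            have h6 := htspec (π x)
            rw [h0, pow_zero, hrepapply] at h6
            exact hcase h6
          · have hspec := htspec (π x)
            rw [hrepapply] at hspec
            have h1 : t (π x) = (t (π x) - 1) + 1 := by omega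
            have hx' : (π ^ (t (π x) - 1)) (rep x) = x := by
              rw [h1, pow_succ', Equiv.Perm.mul_apply] at hspec
              exact π.injective hspec
            have hmin : t x ≤ t (π x) - 1 := Nat.find_min' (hex x) hx'
            omega
        omega
      have hmx : m (π x) = m x := hmapply x
      have htlt' : t x + 1 < m x := by
        rcases Nat.lt_or_ge (t x + 1) (m x) with h1 | h1
        · exact h1
        · exfalso
          have h2 : t x + 1 = m x := by have := htlt x; omega
          have hper' : (π ^ (t x + 1)) (rep x) = π x := by
            rw [pow_succ', Equiv.Perm.mul_apply, htspec x]
          have h7 : (π ^ m (rep x)) (rep x) = rep x := hmper (rep x)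
          rw [hmrep x, ← h2, hper'] at h7
          exact hcase h7.symm
      have hn : m x - t x = (m (π x) - t (π x)) + 1 := by
        rw [hmx, htsucc]; omega
      rw [hn, List.range_succ_eq_map, List.map_cons, List.prod_cons, pow_zero]
      have hps : ∀ u : ℕ, (π ^ (u + 1)) x = (π ^ u) (π x) := by
        intro u; rw [pow_succ, Equiv.Perm.mul_apply]
      simp only [List.map_map, Equiv.Perm.one_apply]
      congr 1



lemma pauli_mul_self (μ : Fin 4) : pauli μ * pauli μ = 1 := by
  fin_cases μ <;>
    simp [pauli, Matrix.mul_fin_two, Complex.I_mul_I] <;>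
    exact (Matrix.one_fin_two).symm

lemma pauliK_unit (μ ν : Fin 4) : IsUnit (pauli μ ⊗ₖ pauli ν) := by
  have h : (pauli μ ⊗ₖ pauli ν) * (pauli μ ⊗ₖ pauli ν) = 1 := by
    rw [← Matrix.mul_kronecker_mul, pauli_mul_self, pauli_mul_self, Matrix.one_kronecker_one]
  exact ⟨⟨_, _, h, h⟩, rfl⟩


end AuxHelpers

/-- If `Q_1, …, Q_k` are two-qubit Pauli strings (`Q_a = pauli (p a) ⊗ pauli (q a)`, a `4×4`
matrix indexed by `Fin 2 × Fin 2`) such that for every cycle of `π`, choosing any element `a`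
of the cycle and letting `m = Function.minimalPeriod π a` be its length, the ordered product
`Q_a Q_{π(a)} ⋯ Q_{π^{m-1}(a)}` is the `4×4` identity, then
`Tr(W_π (Q_1 ⊗ ⋯ ⊗ Q_k)) = 4^{c(π)}`. -/

theorem trace_permOp_kron_pauli_of_cycle_prod_one (k : ℕ) (hk : 1 ≤ k)
    (π : Equiv.Perm (Fin k)) (p q : Fin k → Fin 4)
    (h : ∀ a : Fin k,
      ((List.range (Function.minimalPeriod (⇑π) a)).map
        (fun t => pauli (p ((π ^ t) a)) ⊗ₖ pauli (q ((π ^ t) a)))).prod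
        = (1 : Matrix (Fin 2 × Fin 2) (Fin 2 × Fin 2) ℂ)) :
    (permOp k (Fin 2 × Fin 2) π * kronPow (fun a => pauli (p a) ⊗ₖ pauli (q a))).trace
      = (4 : ℂ) ^ cycleCount π := by
  classical
  set Q : Fin k → Matrix (Fin 2 × Fin 2) (Fin 2 × Fin 2) ℂ :=
    fun a => pauli (p a) ⊗ₖ pauli (q a) with hQdef
  obtain ⟨P, hPunit, hQP⟩ := exists_P π Q (fun x => pauliK_unit _ _) h
  have hkey := key π Q P hPunit hQP
  have htrace : (permOp k (Fin 2 × Fin 2) π * kronPow Q).trace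
      = ∑ i : Fin k → Fin 2 × Fin 2, ∏ x, Q x (i (π⁻¹ x)) (i x) := by
    rw [Matrix.trace]
    simp only [Matrix.diag_apply, Matrix.mul_apply, permOp, kronPow]
    refine Finset.sum_congr rfl fun i _ => ?_
    have hcond : ∀ j : Fin k → Fin 2 × Fin 2,
        (∀ a, i a = j (π a)) ↔ j = fun x => i (π⁻¹ x) := by
      intro j
      constructor
      · intro hj
        funext x
        have := hj (π⁻¹ x)
        rw [Equiv.Perm.inv_def, Equiv.apply_symm_apply] at this
        exact this.symm
      · rintro rfl a
        show i a = i (π⁻¹ (π a))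
        rw [Equiv.Perm.inv_def, Equiv.symm_apply_apply]
    calc ∑ j : Fin k → Fin 2 × Fin 2, (if ∀ a, i a = j (π a) then (1:ℂ) else 0) * ∏ x, Q x (j x) (i x)
        = ∑ j : Fin k → Fin 2 × Fin 2, (if j = (fun x => i (π⁻¹ x)) then (1:ℂ) else 0) * ∏ x, Q x (j x) (i x) := by
          refine Finset.sum_congr rfl fun j _ => ?_
          rw [if_congr (hcond j) rfl rfl]
      _ = ∏ x, Q x (i (π⁻¹ x)) (i x) := by
          simp only [ite_mul, one_mul, zero_mul]
          rw [Finset.sum_ite_eq' Finset.univ (fun x => i (π⁻¹ x))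
            (fun j => ∏ x, Q x (j x) (i x))]
          simp
  rw [htrace, hkey]
  have hcard4 : Fintype.card (Fin 2 × Fin 2) = 4 := by simp
  have hcardk : Fintype.card (Fin k) = k := Fintype.card_fin k
  have hsupp_le : π.support.card ≤ k := by
    simpa [hcardk] using Finset.card_le_univ π.support
  have hfix : (Finset.univ.filter fun a => π a = a).card + π.support.card = k := by
    have h1 := Finset.card_filter_add_card_filter_not
      (s := (Finset.univ : Finset (Fin k))) (p := fun a : Fin k => π a = a)
    rw [Finset.card_univ, hcardk] at h1
    have h2 : π.support = Finset.univ.filter fun a => ¬ π a = a := rfl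
    rw [h2]
    convert h1 using 3
  have hexp : Multiset.card π.cycleType + (Fintype.card (Fin k) - π.support.card)
      = cycleCount π := by
    rw [cycleCount, hcardk]
    omega
  rw [hexp, hcard4]
  norm_num
end

section
/- For all 4×4 complex matrices A₁, A₂, B₁, B₂: ∫ Tr( V^{⊗2} (A₁ ⊗ A₂) (V^{⊗2})† (B₁ ⊗ B₂) ) dμ(V) = (1/15)·[ Tr(A₁)Tr(A₂)Tr(B₁)Tr(B₂) + Tr(A₁A₂)Tr(B₁B₂) ] − (1/60)·[ Tr(A₁)Tr(A₂)Tr(B₁B₂) + Tr(A₁A₂)Tr(B₁)Tr(B₂) ]. -/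
open Matrix MeasureTheory
open scoped Kronecker

noncomputable instance : MeasurableSpace (Matrix.unitaryGroup (Fin 4) ℂ) := borel _
instance : BorelSpace (Matrix.unitaryGroup (Fin 4) ℂ) := ⟨rfl⟩

open scoped ComplexConjugate

namespace HaarKron


abbrev M4 := Matrix (Fin 4) (Fin 4) ℂ
abbrev M16 := Matrix (Fin 4 × Fin 4) (Fin 4 × Fin 4) ℂ

/-- The swap (flip) operator on `ℂ⁴ ⊗ ℂ⁴`. -/
def S16 : M16 := Matrix.of fun p q => if p.1 = q.2 ∧ p.2 = q.1 then (1 : ℂ) else 0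

lemma S16_apply (p q : Fin 4 × Fin 4) :
    S16 p q = if p.1 = q.2 ∧ p.2 = q.1 then (1 : ℂ) else 0 := rfl

lemma S16_mul_kron (A B : M4) : S16 * (A ⊗ₖ B) = (B ⊗ₖ A) * S16 := by
  ext ⟨i, j⟩ ⟨k, l⟩
  rw [Matrix.mul_apply, Matrix.mul_apply]
  rw [Finset.sum_eq_single ((j, i) : Fin 4 × Fin 4)]
  · rw [Finset.sum_eq_single ((l, k) : Fin 4 × Fin 4)]
    · simp [S16_apply, kroneckerMap_apply, mul_comm]
    · rintro ⟨a, b⟩ _ hab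
      simp only [S16_apply]
      rw [if_neg]
      · ring
      · rintro ⟨h1, h2⟩; exact hab (by simp [← h1, ← h2])
    · simp
  · rintro ⟨a, b⟩ _ hab
    simp only [S16_apply]
    rw [if_neg]
    · ring
    · rintro ⟨h1, h2⟩; exact hab (by simp [h1, h2])
  · simp

lemma S16_mul_S16 : S16 * S16 = 1 := by
  ext ⟨i, j⟩ ⟨k, l⟩
  rw [Matrix.mul_apply, Finset.sum_eq_single ((j, i) : Fin 4 × Fin 4)]
  · simp [S16_apply, Matrix.one_apply, Prod.ext_iff, and_comm]
  · rintro ⟨a, b⟩ _ hab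
    simp only [S16_apply]
    rw [if_neg]
    · ring
    · rintro ⟨h1, h2⟩; exact hab (by simp [h1, h2])
  · simp

lemma S16_diag (p : Fin 4 × Fin 4) : S16 p p = if p.1 = p.2 then 1 else 0 := by
  rcases p with ⟨i, j⟩
  by_cases h : i = j <;> simp [S16_apply, h, eq_comm]

lemma trace_S16 : S16.trace = 4 := by
  simp only [Matrix.trace, Matrix.diag, S16_diag, Fintype.sum_prod_type]
  simp [Finset.sum_ite_eq]

lemma trace_S16_mul (A B : M4) : (S16 * (A ⊗ₖ B)).trace = (A * B).trace := by
  have key : ∀ p : Fin 4 × Fin 4, (S16 * (A ⊗ₖ B)) p p = A p.2 p.1 * B p.1 p.2 := by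
    rintro ⟨i, j⟩
    rw [Matrix.mul_apply, Finset.sum_eq_single ((j, i) : Fin 4 × Fin 4)]
    · simp [S16_apply, kroneckerMap_apply]
    · rintro ⟨a, b⟩ _ hab
      simp only [S16_apply]
      rw [if_neg]
      · ring
      · rintro ⟨h1, h2⟩; exact hab (by simp [h1, h2])
    · simp
  simp only [Matrix.trace, Matrix.diag, key, Matrix.mul_apply, Fintype.sum_prod_type]
  rw [Finset.sum_comm]



/-- permutation matrix of `σ` -/
def Pm {n : Type*} [DecidableEq n] [Fintype n] (σ : Equiv.Perm n) : Matrix n n ℂ :=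
  Matrix.of fun i j => if i = σ j then 1 else 0

lemma Pm_mul {n : Type*} [DecidableEq n] [Fintype n] (σ : Equiv.Perm n) (A : Matrix n n ℂ)
    (i j : n) : (Pm σ * A) i j = A (σ⁻¹ i) j := by
  rw [Matrix.mul_apply, Finset.sum_eq_single (σ⁻¹ i)]
  · simp [Pm]
  · intro b _ hb
    simp only [Pm, Matrix.of_apply]
    rw [if_neg]
    · ring
    · intro h; exact hb (by simp [h])
  · simp

lemma mul_Pm {n : Type*} [DecidableEq n] [Fintype n] (σ : Equiv.Perm n) (A : Matrix n n ℂ)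
    (i j : n) : (A * Pm σ) i j = A i (σ j) := by
  rw [Matrix.mul_apply, Finset.sum_eq_single (σ j)]
  · simp [Pm]
  · intro b _ hb
    simp only [Pm, Matrix.of_apply]
    rw [if_neg hb]
    ring
  · simp

lemma Pm_unitary {n : Type*} [DecidableEq n] [Fintype n] (σ : Equiv.Perm n) :
    Pm σ ∈ Matrix.unitaryGroup n ℂ := by
  rw [Matrix.mem_unitaryGroup_iff]
  ext i j
  rw [Matrix.star_eq_conjTranspose, Pm_mul]
  simp [Matrix.conjTranspose_apply, Pm, Matrix.one_apply, eq_comm]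




lemma Pm_kron (σ τ : Equiv.Perm (Fin 4)) :
    (Pm σ ⊗ₖ Pm τ) = Pm (Equiv.prodCongr σ τ) := by
  ext ⟨i, j⟩ ⟨k, l⟩
  by_cases h1 : i = σ k <;> by_cases h2 : j = τ l <;>
    simp [Pm, kroneckerMap_apply, Prod.ext_iff, h1, h2]

/-- the diagonal unitary with `I` in position `k` -/
def Dm (k : Fin 4) : M4 := Matrix.diagonal (fun x => if x = k then Complex.I else 1)

lemma Dm_unitary (k : Fin 4) : Dm k ∈ Matrix.unitaryGroup (Fin 4) ℂ := by
  rw [Matrix.mem_unitaryGroup_iff, Matrix.star_eq_conjTranspose, Dm,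
    Matrix.diagonal_conjTranspose, Matrix.diagonal_mul_diagonal]
  rw [← Matrix.diagonal_one]
  refine congrArg Matrix.diagonal (funext fun x => ?_)
  by_cases h : x = k <;>
    simp [h, Pi.star_apply, Complex.star_def, Complex.conj_I, mul_neg, Complex.I_mul_I]

noncomputable def Rm : M4 := !![3/5, 4/5, 0, 0; -4/5, 3/5, 0, 0; 0, 0, 1, 0; 0, 0, 0, 1]

lemma Rm_unitary : Rm ∈ Matrix.unitaryGroup (Fin 4) ℂ := by
  rw [Matrix.mem_unitaryGroup_iff, Matrix.star_eq_conjTranspose]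
  ext i j
  fin_cases i <;> fin_cases j <;>
    simp [Rm, Matrix.mul_apply, Fin.sum_univ_four, Matrix.conjTranspose_apply,
      Matrix.one_apply, map_div₀, map_ofNat, map_neg, _root_.map_one] <;>
    norm_num




def cnt (m : Fin 4) (p : Fin 4 × Fin 4) : ℕ :=
  (if p.1 = m then 1 else 0) + (if p.2 = m then 1 else 0)

lemma cnt_le (m : Fin 4) (p : Fin 4 × Fin 4) : cnt m p ≤ 2 := by
  unfold cnt; split <;> split <;> norm_num

lemma Ipow_inj {a b : ℕ} (ha : a ≤ 2) (hb : b ≤ 2)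
    (h : Complex.I ^ a = Complex.I ^ b) : a = b := by
  interval_cases a <;> interval_cases b <;>
    first
    | rfl
    | (exfalso; rw [Complex.ext_iff] at h; norm_num [pow_succ] at h)

lemma multiset_eq_of_cnt (i j k l : Fin 4) (h : ∀ m, cnt m (i, j) = cnt m (k, l)) :
    (i = k ∧ j = l) ∨ (i = l ∧ j = k) := by
  revert h; revert i j k l; decide

lemma exists_perm_01 (i j : Fin 4) (hij : i ≠ j) :
    ∃ σ : Equiv.Perm (Fin 4), σ 0 = i ∧ σ 1 = j := by
  classical
  set τ := Equiv.swap (0 : Fin 4) i with hτ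
  have hu : τ j ≠ 0 := by
    intro h
    have h2 := congrArg τ h
    rw [Equiv.swap_apply_self, hτ, Equiv.swap_apply_left] at h2
    exact hij h2.symm
  refine ⟨τ * Equiv.swap 1 (τ j), ?_, ?_⟩
  · have h0 : Equiv.swap (1 : Fin 4) (τ j) 0 = 0 :=
      Equiv.swap_apply_of_ne_of_ne (by norm_num) (Ne.symm hu)
    rw [Equiv.Perm.mul_apply, h0, hτ, Equiv.swap_apply_left]
  · rw [Equiv.Perm.mul_apply, Equiv.swap_apply_left, hτ, Equiv.swap_apply_self]



abbrev M16' := Matrix (Fin 4 × Fin 4) (Fin 4 × Fin 4) ℂ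

lemma Ipow_cnt (m : Fin 4) (p : Fin 4 × Fin 4) :
    Complex.I ^ cnt m p
      = (if p.1 = m then Complex.I else 1) * (if p.2 = m then Complex.I else 1) := by
  unfold cnt
  by_cases h1 : p.1 = m <;> by_cases h2 : p.2 = m <;> simp [h1, h2, pow_succ]

theorem commutant (Y : M16)
    (h : ∀ W : Matrix.unitaryGroup (Fin 4) ℂ,
      ((W : M4) ⊗ₖ (W : M4)) * Y = Y * ((W : M4) ⊗ₖ (W : M4))) :
    Y = Y (0, 1) (0, 1) • (1 : M16) + Y (0, 1) (1, 0) • S16 := by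
  classical
  -- diagonal constraints
  have hD : ∀ (m : Fin 4) (p q : Fin 4 × Fin 4),
      Complex.I ^ cnt m p * Y p q = Y p q * Complex.I ^ cnt m q := by
    intro m p q
    have H : (Dm m ⊗ₖ Dm m) * Y = Y * (Dm m ⊗ₖ Dm m) := h ⟨Dm m, Dm_unitary m⟩
    rw [Dm, Matrix.diagonal_kronecker_diagonal] at H
    have H2 := congrFun (congrFun H p) q
    rw [Matrix.diagonal_mul, Matrix.mul_diagonal] at H2
    rw [Ipow_cnt, Ipow_cnt]
    exact H2
  -- vanishing off the "multiset-equal" positions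
  have hzero : ∀ p q : Fin 4 × Fin 4,
      ¬((p.1 = q.1 ∧ p.2 = q.2) ∨ (p.1 = q.2 ∧ p.2 = q.1)) → Y p q = 0 := by
    intro p q hne
    by_contra hY
    refine hne ?_
    have hcnt : ∀ m, cnt m p = cnt m q := by
      intro m
      have H := hD m p q
      have h2 : (Complex.I ^ cnt m p - Complex.I ^ cnt m q) * Y p q = 0 := by
        rw [sub_mul, H]; ring
      rcases mul_eq_zero.mp h2 with h3 | h3
      · exact Ipow_inj (cnt_le m p) (cnt_le m q) (by linear_combination h3)
      · exact absurd h3 hY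
    have := multiset_eq_of_cnt p.1 p.2 q.1 q.2 (by simpa using hcnt)
    simpa using this
  -- permutation covariance
  have hperm : ∀ (σ : Equiv.Perm (Fin 4)) (a b c d : Fin 4),
      Y (σ a, σ b) (σ c, σ d) = Y (a, b) (c, d) := by
    intro σ a b c d
    have H : (Pm σ ⊗ₖ Pm σ) * Y = Y * (Pm σ ⊗ₖ Pm σ) := h ⟨Pm σ, Pm_unitary σ⟩
    rw [Pm_kron] at H
    have H2 := congrFun (congrFun H ((σ.prodCongr σ) (a, b))) (c, d)
    rw [Pm_mul, mul_Pm, Equiv.Perm.inv_def, Equiv.symm_apply_apply] at H2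
    simpa [Equiv.prodCongr_apply, Prod.map] using H2.symm
  set b := Y (0, 1) (0, 1) with hbdef
  set c := Y (0, 1) (1, 0) with hcdef
  set a := Y (0, 0) (0, 0) with hadef
  have hb : ∀ i j : Fin 4, i ≠ j → Y (i, j) (i, j) = b := by
    intro i j hij
    obtain ⟨σ, h0, h1⟩ := exists_perm_01 i j hij
    have := hperm σ 0 1 0 1
    rw [h0, h1] at this
    exact this
  have hc : ∀ i j : Fin 4, i ≠ j → Y (i, j) (j, i) = c := by
    intro i j hij
    obtain ⟨σ, h0, h1⟩ := exists_perm_01 i j hij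
    have := hperm σ 0 1 1 0
    rw [h0, h1] at this
    exact this
  have ha : ∀ i : Fin 4, Y (i, i) (i, i) = a := by
    intro i
    have := hperm (Equiv.swap 0 i) 0 0 0 0
    rw [Equiv.swap_apply_left] at this
    exact this
  -- rotation constraint : a = b + c
  have hrot : a = b + c := by
    have H : (Rm ⊗ₖ Rm) * Y = Y * (Rm ⊗ₖ Rm) := h ⟨Rm, Rm_unitary⟩
    have E := congrFun (congrFun H ((0 : Fin 4), (0 : Fin 4))) ((0 : Fin 4), (1 : Fin 4))
    rw [Matrix.mul_apply, Matrix.mul_apply, Fintype.sum_prod_type, Fintype.sum_prod_type] at E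
    simp only [Fin.sum_univ_four, kroneckerMap_apply, Rm] at E
    norm_num [Matrix.cons_val', Matrix.cons_val_zero, Matrix.cons_val_one, Matrix.head_cons,
      Matrix.empty_val', Matrix.cons_val_fin_one, Matrix.head_fin_const,
      Matrix.vecHead, Matrix.vecTail, Matrix.cons_val] at E
    rw [show Y (0,0) (0,1) = 0 from hzero (0,0) (0,1) (by decide),
      show Y (1,1) (0,1) = 0 from hzero (1,1) (0,1) (by decide),
      show Y (0,0) (1,0) = 0 from hzero (0,0) (1,0) (by decide),
      show Y (0,0) (1,1) = 0 from hzero (0,0) (1,1) (by decide),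
      show Y (1,0) (0,1) = c from hc 1 0 (by decide),
      show Y (0,1) (0,1) = b from rfl,
      show Y (0,0) (0,0) = a from rfl] at E
    norm_num [Matrix.cons_val_two, Matrix.cons_val_three, Matrix.vecHead, Matrix.vecTail, Function.comp_apply, Fin.succ_zero_eq_one, Fin.succ_one_eq_two, Matrix.cons_val_zero, Matrix.cons_val_one, Matrix.cons_val_succ] at E
    linear_combination (-25 / 12 : ℂ) * E
  -- assemble
  ext ⟨i, j⟩ ⟨k, l⟩
  simp only [Matrix.add_apply, Matrix.smul_apply, Matrix.one_apply, S16_apply, smul_eq_mul]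
  by_cases h1 : i = k ∧ j = l
  · obtain ⟨hik, hjl⟩ := h1
    subst hik; subst hjl
    rw [if_pos rfl]
    by_cases h2 : i = j
    · subst h2
      rw [if_pos ⟨rfl, rfl⟩, ha i, hrot]
      ring
    · rw [if_neg (fun hx => h2 hx.1)]
      rw [hb i j h2]
      ring
  · rw [if_neg (fun hx => h1 ⟨(Prod.ext_iff.mp hx).1, (Prod.ext_iff.mp hx).2⟩)]
    by_cases h2 : i = l ∧ j = k
    · obtain ⟨hil, hjk⟩ := h2
      subst hil; subst hjk
      rw [if_pos ⟨rfl, rfl⟩]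
      have hij : i ≠ j := fun hx => h1 ⟨hx, hx.symm⟩
      rw [hc i j hij]
      ring
    · rw [if_neg h2, hzero (i,j) (k,l) (by
        simp only [not_or]
        exact ⟨fun hx => h1 hx, h2⟩)]
      ring



lemma unitary_entry_normSq_le {A : M4} (hA : A ∈ Matrix.unitaryGroup (Fin 4) ℂ) (i j : Fin 4) :
    Complex.normSq (A i j) ≤ 1 := by
  rw [Matrix.mem_unitaryGroup_iff] at hA
  have h1 : (∑ k, A i k * star (A i k)) = 1 := by
    simpa [Matrix.mul_apply, Matrix.star_eq_conjTranspose, Matrix.conjTranspose_apply,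
      Matrix.one_apply] using congrFun (congrFun hA i) i
  have h2 : (∑ k, Complex.normSq (A i k)) = 1 := by
    have h3 : ((∑ k, Complex.normSq (A i k) : ℝ) : ℂ) = 1 := by
      push_cast
      simpa [Complex.mul_conj] using h1
    exact_mod_cast h3
  calc Complex.normSq (A i j) ≤ ∑ k, Complex.normSq (A i k) :=
        Finset.single_le_sum (fun k _ => Complex.normSq_nonneg _) (Finset.mem_univ j)
    _ = 1 := h2

lemma isCompact_unitaryGroup :
    IsCompact ((Matrix.unitaryGroup (Fin 4) ℂ : Submonoid M4) : Set M4) := by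
  have K1 : IsCompact (Set.univ.pi fun _ : Fin 4 =>
      Set.univ.pi fun _ : Fin 4 => Metric.closedBall (0 : ℂ) 1) :=
    isCompact_univ_pi fun _ => isCompact_univ_pi fun _ => isCompact_closedBall _ _
  refine IsCompact.of_isClosed_subset K1 ?_ ?_
  · have hset : ((Matrix.unitaryGroup (Fin 4) ℂ : Submonoid M4) : Set M4)
        = {A : M4 | A * Aᴴ = 1} := by
      ext A
      simpa [Matrix.star_eq_conjTranspose] using Matrix.mem_unitaryGroup_iff
    rw [hset]
    exact isClosed_eq (continuous_id.matrix_mul continuous_id.matrix_conjTranspose)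
      continuous_const
  · intro A hA
    intro i _
    intro j _
    rw [Metric.mem_closedBall, dist_zero_right]
    have h := unitary_entry_normSq_le hA i j
    have h2 : ‖A i j‖ ^ 2 = Complex.normSq (A i j) := by
      rw [Complex.sq_norm]
    nlinarith [norm_nonneg (A i j)]

instance : CompactSpace (Matrix.unitaryGroup (Fin 4) ℂ) :=
  isCompact_iff_compactSpace.mp isCompact_unitaryGroup


lemma kron_conjT (A B : M4) : (A ⊗ₖ B)ᴴ = Aᴴ ⊗ₖ Bᴴ := by
  ext ⟨i, j⟩ ⟨k, l⟩
  simp [Matrix.conjTranspose_apply, kroneckerMap_apply, star_mul', mul_comm]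

lemma kron_unitary_inv (W : Matrix.unitaryGroup (Fin 4) ℂ) :
    ((W : M4) ⊗ₖ (W : M4))ᴴ * ((W : M4) ⊗ₖ (W : M4)) = 1 := by
  rw [kron_conjT, ← Matrix.mul_kronecker_mul]
  have hW : (W : M4)ᴴ * (W : M4) = 1 := by
    rw [← Matrix.star_eq_conjTranspose]
    exact Matrix.mem_unitaryGroup_iff'.mp W.2
  rw [hW, Matrix.one_kronecker_one]

end HaarKron

open HaarKron

/-- For all `4×4` complex matrices `A₁, A₂, B₁, B₂`, with `μ` the Haar probability measure
on `U(4)`: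
`∫ Tr(V^{⊗2} (A₁⊗A₂) (V^{⊗2})† (B₁⊗B₂)) dμ(V)
  = (1/15)[Tr A₁ Tr A₂ Tr B₁ Tr B₂ + Tr(A₁A₂) Tr(B₁B₂)]
  − (1/60)[Tr A₁ Tr A₂ Tr(B₁B₂) + Tr(A₁A₂) Tr B₁ Tr B₂]`. -/
theorem haar_average_trace_twofold (μ : Measure (Matrix.unitaryGroup (Fin 4) ℂ))
    [μ.IsHaarMeasure] [IsProbabilityMeasure μ]
    (A₁ A₂ B₁ B₂ : Matrix (Fin 4) (Fin 4) ℂ) :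
    (∫ V : Matrix.unitaryGroup (Fin 4) ℂ,
        (((V : Matrix (Fin 4) (Fin 4) ℂ) ⊗ₖ (V : Matrix (Fin 4) (Fin 4) ℂ)) * (A₁ ⊗ₖ A₂) *
          ((V : Matrix (Fin 4) (Fin 4) ℂ) ⊗ₖ (V : Matrix (Fin 4) (Fin 4) ℂ))ᴴ *
          (B₁ ⊗ₖ B₂)).trace ∂μ) =
      (1 / 15 : ℂ) * (A₁.trace * A₂.trace * B₁.trace * B₂.trace
          + (A₁ * A₂).trace * (B₁ * B₂).trace)
        - (1 / 60 : ℂ) * (A₁.trace * A₂.trace * (B₁ * B₂).trace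
          + (A₁ * A₂).trace * B₁.trace * B₂.trace) := by
  classical
  set X : M16 := A₁ ⊗ₖ A₂ with hXdef
  set B : M16 := B₁ ⊗ₖ B₂ with hBdef
  have hgc : ∀ p q, Continuous fun V : Matrix.unitaryGroup (Fin 4) ℂ =>
      (((V : M4) ⊗ₖ (V : M4)) * X * ((V : M4) ⊗ₖ (V : M4))ᴴ) p q := by
    intro p q
    have hent : ∀ i j : Fin 4, Continuous fun V : Matrix.unitaryGroup (Fin 4) ℂ =>
        (V : M4) i j := fun i j =>
      (continuous_apply j).comp ((continuous_apply i).comp continuous_subtype_val)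
    simp only [Matrix.mul_apply, Matrix.conjTranspose_apply, kroneckerMap_apply]
    exact continuous_finset_sum _ fun s _ =>
      (continuous_finset_sum _ fun r _ =>
        ((hent p.1 r.1).mul (hent p.2 r.2)).mul continuous_const).mul
        (((hent q.1 s.1).mul (hent q.2 s.2)).star)
  have hint : ∀ p q, Integrable (fun V : Matrix.unitaryGroup (Fin 4) ℂ =>
      (((V : M4) ⊗ₖ (V : M4)) * X * ((V : M4) ⊗ₖ (V : M4))ᴴ) p q) μ := fun p q =>
    (hgc p q).integrable_of_hasCompactSupport (HasCompactSupport.of_compactSpace _)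
  set Y : M16 := Matrix.of (fun p q => ∫ V : Matrix.unitaryGroup (Fin 4) ℂ,
      (((V : M4) ⊗ₖ (V : M4)) * X * ((V : M4) ⊗ₖ (V : M4))ᴴ) p q ∂μ) with hYdef
  have hYapp : ∀ p q, Y p q = ∫ V : Matrix.unitaryGroup (Fin 4) ℂ,
      (((V : M4) ⊗ₖ (V : M4)) * X * ((V : M4) ⊗ₖ (V : M4))ᴴ) p q ∂μ := fun p q => rfl
  -- step 1 : the integral is Tr (Y * B)
  have step1 : (∫ V : Matrix.unitaryGroup (Fin 4) ℂ,
      (((V : M4) ⊗ₖ (V : M4)) * X * ((V : M4) ⊗ₖ (V : M4))ᴴ * B).trace ∂μ)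
      = (Y * B).trace := by
    have e1 : ∀ V : Matrix.unitaryGroup (Fin 4) ℂ,
        (((V : M4) ⊗ₖ (V : M4)) * X * ((V : M4) ⊗ₖ (V : M4))ᴴ * B).trace
        = ∑ p, ∑ r, (((V : M4) ⊗ₖ (V : M4)) * X * ((V : M4) ⊗ₖ (V : M4))ᴴ) p r * B r p := by
      intro V
      simp [Matrix.trace, Matrix.diag, Matrix.mul_apply]
    calc (∫ V : Matrix.unitaryGroup (Fin 4) ℂ,
        (((V : M4) ⊗ₖ (V : M4)) * X * ((V : M4) ⊗ₖ (V : M4))ᴴ * B).trace ∂μ)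
        = ∫ V : Matrix.unitaryGroup (Fin 4) ℂ,
          ∑ p, ∑ r, (((V : M4) ⊗ₖ (V : M4)) * X * ((V : M4) ⊗ₖ (V : M4))ᴴ) p r * B r p ∂μ := by
          simp only [e1]
      _ = ∑ p, ∑ r, ∫ V : Matrix.unitaryGroup (Fin 4) ℂ,
          (((V : M4) ⊗ₖ (V : M4)) * X * ((V : M4) ⊗ₖ (V : M4))ᴴ) p r * B r p ∂μ := by
          rw [integral_finset_sum _ (fun p _ =>
            integrable_finset_sum _ (fun r _ => (hint p r).mul_const _))]
          exact Finset.sum_congr rfl fun p _ =>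
            integral_finset_sum _ fun r _ => (hint p r).mul_const _
      _ = ∑ p, ∑ r, Y p r * B r p := by
          refine Finset.sum_congr rfl fun p _ => Finset.sum_congr rfl fun r _ => ?_
          rw [hYapp, integral_mul_const]
      _ = (Y * B).trace := by simp [Matrix.trace, Matrix.diag, Matrix.mul_apply]
  -- invariance : Y commutes with W ⊗ W for every unitary W
  have hcomm : ∀ W : Matrix.unitaryGroup (Fin 4) ℂ,
      ((W : M4) ⊗ₖ (W : M4)) * Y = Y * ((W : M4) ⊗ₖ (W : M4)) := by
    intro W
    have hg_eq : ∀ V : Matrix.unitaryGroup (Fin 4) ℂ,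
        ((W : M4) ⊗ₖ (W : M4)) * (((V : M4) ⊗ₖ (V : M4)) * X * ((V : M4) ⊗ₖ (V : M4))ᴴ)
        = (((W * V : Matrix.unitaryGroup (Fin 4) ℂ) : M4)
            ⊗ₖ ((W * V : Matrix.unitaryGroup (Fin 4) ℂ) : M4)) * X
          * (((W * V : Matrix.unitaryGroup (Fin 4) ℂ) : M4)
            ⊗ₖ ((W * V : Matrix.unitaryGroup (Fin 4) ℂ) : M4))ᴴ
          * ((W : M4) ⊗ₖ (W : M4)) := by
      intro V
      have hcoe : ((W * V : Matrix.unitaryGroup (Fin 4) ℂ) : M4) = (W : M4) * (V : M4) := rfl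
      rw [hcoe, Matrix.mul_kronecker_mul, Matrix.conjTranspose_mul]
      calc ((W : M4) ⊗ₖ (W : M4)) * (((V : M4) ⊗ₖ (V : M4)) * X * ((V : M4) ⊗ₖ (V : M4))ᴴ)
          = ((W : M4) ⊗ₖ (W : M4)) * ((V : M4) ⊗ₖ (V : M4)) * X * ((V : M4) ⊗ₖ (V : M4))ᴴ
            * (((W : M4) ⊗ₖ (W : M4))ᴴ * ((W : M4) ⊗ₖ (W : M4))) := by
            rw [kron_unitary_inv W, mul_one]
            noncomm_ring
        _ = ((W : M4) ⊗ₖ (W : M4)) * ((V : M4) ⊗ₖ (V : M4)) * X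
            * (((V : M4) ⊗ₖ (V : M4))ᴴ * ((W : M4) ⊗ₖ (W : M4))ᴴ) * ((W : M4) ⊗ₖ (W : M4)) := by
            noncomm_ring
    ext p q
    have lhs : (((W : M4) ⊗ₖ (W : M4)) * Y) p q
        = ∫ V : Matrix.unitaryGroup (Fin 4) ℂ,
          (((W : M4) ⊗ₖ (W : M4)) * (((V : M4) ⊗ₖ (V : M4)) * X * ((V : M4) ⊗ₖ (V : M4))ᴴ)) p q ∂μ := by
      rw [Matrix.mul_apply]
      calc ∑ r, ((W : M4) ⊗ₖ (W : M4)) p r * Y r q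
          = ∑ r, ∫ V : Matrix.unitaryGroup (Fin 4) ℂ,
            ((W : M4) ⊗ₖ (W : M4)) p r
              * (((V : M4) ⊗ₖ (V : M4)) * X * ((V : M4) ⊗ₖ (V : M4))ᴴ) r q ∂μ := by
            refine Finset.sum_congr rfl fun r _ => ?_
            rw [hYapp, integral_const_mul]
        _ = ∫ V : Matrix.unitaryGroup (Fin 4) ℂ,
            ∑ r, ((W : M4) ⊗ₖ (W : M4)) p r
              * (((V : M4) ⊗ₖ (V : M4)) * X * ((V : M4) ⊗ₖ (V : M4))ᴴ) r q ∂μ :=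
            (integral_finset_sum _ fun r _ => (hint r q).const_mul _).symm
        _ = _ := by simp only [Matrix.mul_apply]
    have rhs : (Y * ((W : M4) ⊗ₖ (W : M4))) p q
        = ∫ V : Matrix.unitaryGroup (Fin 4) ℂ,
          ((((V : M4) ⊗ₖ (V : M4)) * X * ((V : M4) ⊗ₖ (V : M4))ᴴ) * ((W : M4) ⊗ₖ (W : M4))) p q ∂μ := by
      rw [Matrix.mul_apply]
      calc ∑ r, Y p r * ((W : M4) ⊗ₖ (W : M4)) r q
          = ∑ r, ∫ V : Matrix.unitaryGroup (Fin 4) ℂ,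
            (((V : M4) ⊗ₖ (V : M4)) * X * ((V : M4) ⊗ₖ (V : M4))ᴴ) p r
              * ((W : M4) ⊗ₖ (W : M4)) r q ∂μ := by
            refine Finset.sum_congr rfl fun r _ => ?_
            rw [hYapp, integral_mul_const]
        _ = ∫ V : Matrix.unitaryGroup (Fin 4) ℂ,
            ∑ r, (((V : M4) ⊗ₖ (V : M4)) * X * ((V : M4) ⊗ₖ (V : M4))ᴴ) p r
              * ((W : M4) ⊗ₖ (W : M4)) r q ∂μ :=
            (integral_finset_sum _ fun r _ => (hint p r).mul_const _).symm
        _ = _ := by simp only [Matrix.mul_apply]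
    rw [lhs, rhs]
    calc (∫ V : Matrix.unitaryGroup (Fin 4) ℂ,
        (((W : M4) ⊗ₖ (W : M4)) * (((V : M4) ⊗ₖ (V : M4)) * X * ((V : M4) ⊗ₖ (V : M4))ᴴ)) p q ∂μ)
        = ∫ V : Matrix.unitaryGroup (Fin 4) ℂ,
          ((((W * V : Matrix.unitaryGroup (Fin 4) ℂ) : M4)
              ⊗ₖ ((W * V : Matrix.unitaryGroup (Fin 4) ℂ) : M4)) * X
            * (((W * V : Matrix.unitaryGroup (Fin 4) ℂ) : M4)
              ⊗ₖ ((W * V : Matrix.unitaryGroup (Fin 4) ℂ) : M4))ᴴ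
            * ((W : M4) ⊗ₖ (W : M4))) p q ∂μ := by
          simp only [hg_eq]
      _ = _ := integral_mul_left_eq_self (fun V : Matrix.unitaryGroup (Fin 4) ℂ =>
            ((((V : M4) ⊗ₖ (V : M4)) * X * ((V : M4) ⊗ₖ (V : M4))ᴴ)
              * ((W : M4) ⊗ₖ (W : M4))) p q) W
  -- trace identities
  have htr1 : Y.trace = X.trace := by
    have e : ∀ V : Matrix.unitaryGroup (Fin 4) ℂ,
        (((V : M4) ⊗ₖ (V : M4)) * X * ((V : M4) ⊗ₖ (V : M4))ᴴ).trace = X.trace := by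
      intro V
      rw [Matrix.trace_mul_cycle, kron_unitary_inv V, one_mul]
    calc Y.trace = ∑ p, ∫ V : Matrix.unitaryGroup (Fin 4) ℂ,
          (((V : M4) ⊗ₖ (V : M4)) * X * ((V : M4) ⊗ₖ (V : M4))ᴴ) p p ∂μ := by
          simp [Matrix.trace, Matrix.diag, hYapp]
      _ = ∫ V : Matrix.unitaryGroup (Fin 4) ℂ,
          ∑ p, (((V : M4) ⊗ₖ (V : M4)) * X * ((V : M4) ⊗ₖ (V : M4))ᴴ) p p ∂μ :=
          (integral_finset_sum _ fun p _ => hint p p).symm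
      _ = ∫ V : Matrix.unitaryGroup (Fin 4) ℂ,
          (((V : M4) ⊗ₖ (V : M4)) * X * ((V : M4) ⊗ₖ (V : M4))ᴴ).trace ∂μ := rfl
      _ = ∫ _V : Matrix.unitaryGroup (Fin 4) ℂ, X.trace ∂μ := by simp only [e]
      _ = X.trace := by simp
  have htr2 : (S16 * Y).trace = (S16 * X).trace := by
    have e : ∀ V : Matrix.unitaryGroup (Fin 4) ℂ,
        (S16 * (((V : M4) ⊗ₖ (V : M4)) * X * ((V : M4) ⊗ₖ (V : M4))ᴴ)).trace
          = (S16 * X).trace := by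
      intro V
      have h1 : S16 * (((V : M4) ⊗ₖ (V : M4)) * X * ((V : M4) ⊗ₖ (V : M4))ᴴ)
          = ((V : M4) ⊗ₖ (V : M4)) * (S16 * X) * ((V : M4) ⊗ₖ (V : M4))ᴴ := by
        have hs := S16_mul_kron (V : M4) (V : M4)
        calc S16 * (((V : M4) ⊗ₖ (V : M4)) * X * ((V : M4) ⊗ₖ (V : M4))ᴴ)
            = (S16 * ((V : M4) ⊗ₖ (V : M4))) * X * ((V : M4) ⊗ₖ (V : M4))ᴴ := by noncomm_ring
          _ = (((V : M4) ⊗ₖ (V : M4)) * S16) * X * ((V : M4) ⊗ₖ (V : M4))ᴴ := by rw [hs]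
          _ = ((V : M4) ⊗ₖ (V : M4)) * (S16 * X) * ((V : M4) ⊗ₖ (V : M4))ᴴ := by noncomm_ring
      rw [h1, Matrix.trace_mul_cycle, ← mul_assoc, kron_unitary_inv V, one_mul]
    have expand : (S16 * Y).trace = ∑ p, ∑ r, S16 p r * Y r p := by
      simp [Matrix.trace, Matrix.diag, Matrix.mul_apply]
    calc (S16 * Y).trace = ∑ p, ∑ r, S16 p r * Y r p := expand
      _ = ∑ p, ∑ r, ∫ V : Matrix.unitaryGroup (Fin 4) ℂ,
          S16 p r * (((V : M4) ⊗ₖ (V : M4)) * X * ((V : M4) ⊗ₖ (V : M4))ᴴ) r p ∂μ := by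
          refine Finset.sum_congr rfl fun p _ => Finset.sum_congr rfl fun r _ => ?_
          rw [hYapp, integral_const_mul]
      _ = ∫ V : Matrix.unitaryGroup (Fin 4) ℂ,
          ∑ p, ∑ r, S16 p r * (((V : M4) ⊗ₖ (V : M4)) * X * ((V : M4) ⊗ₖ (V : M4))ᴴ) r p ∂μ := by
          rw [integral_finset_sum _ (fun p _ =>
            integrable_finset_sum _ (fun r _ => (hint r p).const_mul (S16 p r)))]
          refine Finset.sum_congr rfl fun p _ =>
            (integral_finset_sum _ fun r _ => (hint r p).const_mul _).symm
      _ = ∫ V : Matrix.unitaryGroup (Fin 4) ℂ,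
          (S16 * (((V : M4) ⊗ₖ (V : M4)) * X * ((V : M4) ⊗ₖ (V : M4))ᴴ)).trace ∂μ := by
          congr 1
      _ = ∫ _V : Matrix.unitaryGroup (Fin 4) ℂ, (S16 * X).trace ∂μ := by simp only [e]
      _ = (S16 * X).trace := by simp
  -- structure of Y
  have hstruct := commutant Y hcomm
  set b := Y (0, 1) (0, 1) with hb
  set c := Y (0, 1) (1, 0) with hc
  have t1 : b * 16 + c * 4 = A₁.trace * A₂.trace := by
    have := htr1
    rw [hstruct, hXdef, Matrix.trace_kronecker] at this
    rw [← this]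
    simp [Matrix.trace_add, Matrix.trace_smul, Matrix.trace_one, trace_S16]
    try ring
  have t2 : b * 4 + c * 16 = (A₁ * A₂).trace := by
    have := htr2
    rw [hstruct, hXdef, trace_S16_mul] at this
    rw [← this, mul_add, mul_smul_comm, mul_smul_comm, S16_mul_S16, mul_one]
    simp [Matrix.trace_add, Matrix.trace_smul, Matrix.trace_one, trace_S16]
    try ring
  rw [step1, hstruct]
  have expandYB : ((b • (1 : M16) + c • S16) * B).trace
      = b * (B₁.trace * B₂.trace) + c * (B₁ * B₂).trace := by
    rw [add_mul, Matrix.smul_mul, Matrix.smul_mul, one_mul, Matrix.trace_add,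
      Matrix.trace_smul, Matrix.trace_smul, hBdef, Matrix.trace_kronecker, trace_S16_mul]
    try simp [smul_eq_mul]
  rw [expandYB]
  linear_combination (B₁.trace * B₂.trace / 15 - (B₁ * B₂).trace / 60) * t1
    + ((B₁ * B₂).trace / 15 - B₁.trace * B₂.trace / 60) * t2
end
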